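/- arXiv:1801.00561 — 4 statements merged into one kernel-verified Lean document; each statement's English description precedes it below -/
import Mathlib

section
/- Let $F : \mathcal{H} \to \mathcal{H}$ be monotone, let $x^k, y^k \in \mathcal{H}$ with $x^k \neq y^k$, $\alpha_k > 0$, $\mu \in (0,1)$ with $\alpha_k \|F(x^k) - F(y^k)\| \leq \mu \|x^k - y^k\|$. Define $d(x^k, y^k) = (x^k - y^k) - \alpha_k(F(x^k) - F(y^k))$ and $\rho_k = \langle x^k - y^k, d(x^k, y^k)\rangle / \|d(x^k, y^k)\|^2$. Then $\rho_k \geq (1 - \mu)/(1 + \mu^2)$. -/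
/-!
Write `u = xk - yk` and `v = αk • (F xk - F yk)`, so `d = u - v`. Monotonicity gives `0 ≤ ⟪u, v⟫`
and the step condition gives `‖v‖ ≤ μ ‖u‖`. By Cauchy–Schwarz the numerator
`⟪u, u - v⟫ = ‖u‖² - ⟪u, v⟫` is at least `(1 - μ) ‖u‖²`, while expanding the square gives
`‖u - v‖² = ‖u‖² - 2 ⟪u, v⟫ + ‖v‖² ≤ (1 + μ²) ‖u‖²`.
-/

open scoped RealInnerProductSpace

section

variable {E : Type*} [NormedAddCommGroup E] [InnerProductSpace ℝ E] {u v : E} {μ : ℝ}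

lemma mul_norm_sq_le_inner_sub (hv : ‖v‖ ≤ μ * ‖u‖) : (1 - μ) * ‖u‖ ^ 2 ≤ ⟪u, u - v⟫ := by
  have huv : ⟪u, v⟫ ≤ μ * ‖u‖ ^ 2 :=
    calc ⟪u, v⟫ ≤ ‖u‖ * ‖v‖ := real_inner_le_norm u v
      _ ≤ ‖u‖ * (μ * ‖u‖) := mul_le_mul_of_nonneg_left hv (norm_nonneg u)
      _ = μ * ‖u‖ ^ 2 := by ring
  rw [inner_sub_right, real_inner_self_eq_norm_sq]
  linarith

lemma norm_sub_sq_le_of_inner_nonneg (huv : 0 ≤ ⟪u, v⟫) (hv : ‖v‖ ≤ μ * ‖u‖) :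
    ‖u - v‖ ^ 2 ≤ (1 + μ ^ 2) * ‖u‖ ^ 2 := by
  have hv2 : ‖v‖ ^ 2 ≤ μ ^ 2 * ‖u‖ ^ 2 := by
    rw [← mul_pow]
    exact pow_le_pow_left₀ (norm_nonneg v) hv 2
  rw [norm_sub_sq_real]
  linarith

lemma div_le_inner_sub_div_norm_sub_sq (hu : u ≠ 0) (huv : 0 ≤ ⟪u, v⟫)
    (hv : ‖v‖ ≤ μ * ‖u‖) (hμ : μ < 1) :
    (1 - μ) / (1 + μ ^ 2) ≤ ⟪u, u - v⟫ / ‖u - v‖ ^ 2 := by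
  have hu2 : 0 < ‖u‖ ^ 2 := by positivity
  have hnum : (1 - μ) * ‖u‖ ^ 2 ≤ ⟪u, u - v⟫ := mul_norm_sq_le_inner_sub hv
  have hnum_pos : 0 < ⟪u, u - v⟫ := (mul_pos (sub_pos.2 hμ) hu2).trans_le hnum
  have hd : u - v ≠ 0 := fun h ↦ by simp [h] at hnum_pos
  calc (1 - μ) / (1 + μ ^ 2) = (1 - μ) * ‖u‖ ^ 2 / ((1 + μ ^ 2) * ‖u‖ ^ 2) := by
        rw [mul_div_mul_right _ _ hu2.ne']
    _ ≤ ⟪u, u - v⟫ / ‖u - v‖ ^ 2 :=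
        div_le_div₀ hnum_pos.le hnum (by positivity) (norm_sub_sq_le_of_inner_nonneg huv hv)

end

theorem rho_lower_bound_general
    {H : Type*} [NormedAddCommGroup H] [InnerProductSpace ℝ H]
    (F : H → H) (hmono : ∀ x y : H, ⟪F x - F y, x - y⟫ ≥ 0)
    (xk yk : H) (hxy : xk ≠ yk)
    (αk μ : ℝ) (hα : 0 < αk) (hμ1 : μ < 1)
    (hstep : αk * ‖F xk - F yk‖ ≤ μ * ‖xk - yk‖)
    (d : H) (hd : d = (xk - yk) - αk • (F xk - F yk))
    (ρk : ℝ) (hρ : ρk = ⟪xk - yk, d⟫ / ‖d‖ ^ 2) :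
    ρk ≥ (1 - μ) / (1 + μ ^ 2) := by
  have hinner : 0 ≤ ⟪xk - yk, αk • (F xk - F yk)⟫ := by
    rw [real_inner_smul_right, real_inner_comm]
    exact mul_nonneg hα.le (hmono xk yk)
  have hnorm : ‖αk • (F xk - F yk)‖ ≤ μ * ‖xk - yk‖ := by
    rwa [norm_smul, Real.norm_of_nonneg hα.le]
  rw [hρ, hd]
  exact div_le_inner_sub_div_norm_sub_sq (sub_ne_zero.2 hxy) hinner hnorm hμ1

theorem rho_lower_bound
    {H : Type*} [NormedAddCommGroup H] [InnerProductSpace ℝ H]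
    (F : H → H) (hmono : ∀ x y : H, ⟪F x - F y, x - y⟫ ≥ 0)
    (xk yk : H) (hxy : xk ≠ yk)
    (αk μ : ℝ) (hα : 0 < αk) (hμ0 : 0 < μ) (hμ1 : μ < 1)
    (hstep : αk * ‖F xk - F yk‖ ≤ μ * ‖xk - yk‖)
    (d : H) (hd : d = (xk - yk) - αk • (F xk - F yk))
    (ρk : ℝ) (hρ : ρk = ⟪xk - yk, d⟫ / ‖d‖ ^ 2) :
    ρk ≥ (1 - μ) / (1 + μ ^ 2) :=
  rho_lower_bound_general F hmono xk yk hxy αk μ hα hμ1 hstep d hd ρk hρ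
end

section
/- Under the setting of the contraction inequality, with $x^{k+1} = P_{T_k}(x^k - \gamma\rho_k\alpha_k F(y^k))$ and $x^* \in C$ solving the VI, the following cross-term bound holds: $-2\gamma\rho_k\alpha_k \langle x^{k+1} - x^*, F(y^k)\rangle \leq -2\gamma\rho_k \langle x^{k+1} - y^k, d_k\rangle$, where $d_k = (x^k - y^k) - \alpha_k(F(x^k) - F(y^k))$. -/
/-! Monotonicity of `F` and the variational inequality at `x*` give `⟪F y, y - x*⟫ ≥ 0` for every
`y ∈ C`, so `⟪F y, w - y⟫ ≤ ⟪F y, w - x*⟫`. Rewriting `(x - α F x) - y` as `d - α F y`, the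
halfspace condition defining `T` reads `⟪d, w - y⟫ ≤ α ⟪F y, w - y⟫`. Chaining the two and
scaling by `2γρ > 0` gives the bound. -/

open scoped RealInnerProductSpace

section

variable {H : Type*} [NormedAddCommGroup H] [InnerProductSpace ℝ H]

theorem inner_sub_solution_nonneg {C : Set H} {F : H → H} {xstar y : H}
    (hmono : ∀ x y : H, ⟪F x - F y, x - y⟫ ≥ 0) (hVI : ∀ x ∈ C, ⟪F xstar, x - xstar⟫ ≥ 0)
    (hy : y ∈ C) : 0 ≤ ⟪F y, y - xstar⟫ := by
  have hsplit : ⟪F y, y - xstar⟫ = ⟪F y - F xstar, y - xstar⟫ + ⟪F xstar, y - xstar⟫ := by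
    rw [inner_sub_left]; ring
  linarith [hmono y xstar, hVI y hy]

theorem inner_le_inner_sub_solution {C : Set H} {F : H → H} {xstar y : H}
    (hmono : ∀ x y : H, ⟪F x - F y, x - y⟫ ≥ 0) (hVI : ∀ x ∈ C, ⟪F xstar, x - xstar⟫ ≥ 0)
    (hy : y ∈ C) (w : H) : ⟪F y, w - y⟫ ≤ ⟪F y, w - xstar⟫ := by
  have hsplit : ⟪F y, w - xstar⟫ = ⟪F y, w - y⟫ + ⟪F y, y - xstar⟫ := by
    rw [← inner_add_right, sub_add_sub_cancel]
  linarith [inner_sub_solution_nonneg hmono hVI hy]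

theorem inner_le_of_inner_extragradient_nonpos {F : H → H} {α : ℝ} {x y w : H}
    (hw : ⟪(x - α • F x) - y, w - y⟫ ≤ 0) :
    ⟪(x - y) - α • (F x - F y), w - y⟫ ≤ α * ⟪F y, w - y⟫ := by
  have hrw : (x - α • F x) - y = ((x - y) - α • (F x - F y)) - α • F y := by
    rw [smul_sub]; abel
  rwa [hrw, inner_sub_left, real_inner_smul_left, sub_nonpos] at hw

end

theorem cross_term_bound_general
    {H : Type*} [NormedAddCommGroup H] [InnerProductSpace ℝ H]
    (C : Set H)
    (F : H → H) (hmono : ∀ x y : H, ⟪F x - F y, x - y⟫ ≥ 0)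
    (xstar : H)
    (hVI : ∀ x ∈ C, ⟪F xstar, x - xstar⟫ ≥ 0)
    (γ ρk αk : ℝ) (hγ : 0 < γ) (hρ : 0 < ρk) (hα : 0 < αk)
    (xk yk : H) (hykC : yk ∈ C)
    (Tk : Set H) (hTk : Tk = {w : H | ⟪(xk - αk • F xk) - yk, w - yk⟫ ≤ 0})
    (dk : H) (hdk : dk = (xk - yk) - αk • (F xk - F yk))
    (xk1 : H) (hxk1T : xk1 ∈ Tk) :
    -(2 * γ * ρk * αk) * ⟪xk1 - xstar, F yk⟫ ≤ -(2 * γ * ρk) * ⟪xk1 - yk, dk⟫ := by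
  subst hTk hdk
  have hd : ⟪(xk - yk) - αk • (F xk - F yk), xk1 - yk⟫ ≤ αk * ⟪F yk, xk1 - yk⟫ :=
    inner_le_of_inner_extragradient_nonpos hxk1T
  have hF : αk * ⟪F yk, xk1 - yk⟫ ≤ αk * ⟪F yk, xk1 - xstar⟫ :=
    mul_le_mul_of_nonneg_left (inner_le_inner_sub_solution hmono hVI hykC xk1) hα.le
  have hγρ : 0 < 2 * γ * ρk := by positivity
  rw [real_inner_comm (F yk), real_inner_comm _ (xk1 - yk), neg_mul, neg_mul, neg_le_neg_iff,
    mul_assoc (2 * γ * ρk)]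
  exact mul_le_mul_of_nonneg_left (hd.trans hF) hγρ.le

theorem cross_term_bound
    {H : Type*} [NormedAddCommGroup H] [InnerProductSpace ℝ H] [CompleteSpace H]
    (C : Set H) (hne : C.Nonempty) (hclosed : IsClosed C) (hconv : Convex ℝ C)
    (F : H → H) (hmono : ∀ x y : H, ⟪F x - F y, x - y⟫ ≥ 0)
    (xstar : H) (hxstarC : xstar ∈ C)
    (hVI : ∀ x ∈ C, ⟪F xstar, x - xstar⟫ ≥ 0)
    (γ ρk αk : ℝ) (hγ : 0 < γ) (hρ : 0 < ρk) (hα : 0 < αk)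
    (xk yk : H) (hykC : yk ∈ C)
    (hykproj : ∀ z ∈ C, ‖(xk - αk • F xk) - yk‖ ≤ ‖(xk - αk • F xk) - z‖)
    (Tk : Set H) (hTk : Tk = {w : H | ⟪(xk - αk • F xk) - yk, w - yk⟫ ≤ 0})
    (dk : H) (hdk : dk = (xk - yk) - αk • (F xk - F yk))
    (xk1 : H) (hxk1T : xk1 ∈ Tk) :
    -(2 * γ * ρk * αk) * ⟪xk1 - xstar, F yk⟫ ≤ -(2 * γ * ρk) * ⟪xk1 - yk, dk⟫ :=
  cross_term_bound_general C F hmono xstar hVI γ ρk αk hγ hρ hα xk yk hykC Tk hTk dk hdk xk1 hxk1T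
end

section
/- (Weak convergence of the modified subgradient extragradient method.) Let $C \subseteq \mathcal{H}$ be nonempty closed convex, $F : \mathcal{H} \to \mathcal{H}$ monotone and $L$-Lipschitz continuous, with nonempty VI solution set. Let $\gamma \in (0,2)$, $\mu \in (0,1)$, and generate for all $k$: $y^k = P_C(x^k - \alpha_k F(x^k))$ with stepsizes $\alpha_k \in [\underline{\alpha}, \sigma]$ ($\underline{\alpha} > 0$) satisfying $\alpha_k\|F(x^k) - F(y^k)\| \leq \mu\|x^k - y^k\|$ and $x^k \neq y^k$; $T_k = \{w : \langle (x^k - \alpha_k F(x^k)) - y^k, w - y^k\rangle \leq 0\}$; $d_k = (x^k - y^k) - \alpha_k(F(x^k) - F(y^k))$; $\rho_k = \langle x^k - y^k, d_k\rangle/\|d_k\|^2$; $x^{k+1} = P_{T_k}(x^k - \gamma\rho_k\alpha_k F(y^k))$. Then $\{x^k\}$ converges weakly to a solution of the variational inequality. -/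
open scoped RealInnerProductSpace Topology
open Filter Set Bornology

/-!
For every solution `z`, one iteration satisfies
`‖x (k+1) - z‖² + γ (2 - γ) ((1 - μ) / (1 + μ))² ‖x k - y k‖² ≤ ‖x k - z‖²`: the half-space `T k`
contains `C`, hence `z`, so projecting onto it is firmly nonexpansive towards `z`, and monotonicity
of `F` controls the remaining cross term. Thus `(x k)` is Fejér monotone with respect to the
solution set and `‖x k - y k‖ → 0`. Because `y k` is a projected gradient step, the gap
`⟪F (y k), y k - w⟫` is `O(‖x k - y k‖)` for every `w ∈ C`, so by monotonicity every weak cluster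
point `q` satisfies Minty's inequality `⟪F w, w - q⟫ ≥ 0`, and hence solves the variational
inequality. Opial's argument concludes: bounded sets are weakly relatively compact, and two weak
cluster points `p`, `q` coincide since `⟪x k, p - q⟫` converges by polarization.
-/

theorem MapClusterPt.add_tendsto_zero {α G : Type*} [AddZeroClass G] [TopologicalSpace G]
    [ContinuousAdd G] {l : Filter α} {f g : α → G} {a : G} (hf : MapClusterPt a l f)
    (hg : Tendsto g l (𝓝 0)) : MapClusterPt a l fun k => f k + g k := by
  rw [mapClusterPt_iff_frequently] at hf ⊢
  intro s hs
  have hadd : ∀ᶠ p : G × G in 𝓝 a ×ˢ 𝓝 0, p.1 + p.2 ∈ s := by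
    rw [← nhds_prod_eq]
    exact continuous_add.continuousAt (x := (a, 0)) (by simpa using hs)
  obtain ⟨U, hU, V, hV, hUV⟩ := eventually_prod_iff.1 hadd
  exact (hf _ hU).mp ((hg.eventually hV).mono fun k hgk hfk => hUV hfk hgk)

theorem MapClusterPt.eq_of_tendsto {α X : Type*} [TopologicalSpace X] [T2Space X]
    {l : Filter α} {f : α → X} {a b : X} (ha : MapClusterPt a l f) (hb : Tendsto f l (𝓝 b)) :
    a = b :=
  eq_of_nhds_neBot (ha.neBot.mono (inf_le_inf_left _ hb))

theorem MapClusterPt.le_of_forall_le_add {α : Type*} {l : Filter α} {f ε : α → ℝ} {a c : ℝ}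
    (ha : MapClusterPt a l f) (hε : Tendsto ε l (𝓝 0)) (hle : ∀ k, f k ≤ c + ε k) : a ≤ c := by
  have hshift : MapClusterPt a l fun k => f k + -ε k := ha.add_tendsto_zero (by simpa using hε.neg)
  exact isClosed_Iic.mem_of_mapClusterPt hshift (.of_forall fun k => by simp [hle k])

theorem tendsto_zero_of_add_le_succ {a b : ℕ → ℝ} (ha : ∀ k, 0 ≤ a k) (hb : ∀ k, 0 ≤ b k)
    (h : ∀ k, a (k + 1) + b k ≤ a k) : Tendsto b atTop (𝓝 0) := by
  have hanti : Antitone a := antitone_nat_of_succ_le fun k => by linarith [hb k, h k]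
  have hlim := tendsto_atTop_ciInf hanti ⟨0, forall_mem_range.2 ha⟩
  refine squeeze_zero hb (fun k => le_sub_iff_add_le'.2 (h k)) ?_
  simpa using hlim.sub (hlim.comp (tendsto_add_atTop_nat 1))

theorem isBounded_range_of_fejer {E : Type*} [SeminormedAddCommGroup E] {x : ℕ → E} {z : E}
    (hz : ∀ k, ‖x (k + 1) - z‖ ≤ ‖x k - z‖) :
    IsBounded (range x) := by
  refine (Metric.isBounded_closedBall (x := z) (r := ‖x 0 - z‖)).subset ?_
  rintro _ ⟨k, rfl⟩
  exact mem_closedBall_iff_norm.2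
    (antitone_nat_of_succ_le (f := fun k => ‖x k - z‖) hz (Nat.zero_le k))

theorem isBounded_range_of_tendsto_sub {E : Type*} [SeminormedAddCommGroup E] {x y : ℕ → E}
    (hx : IsBounded (range x)) (hxy : Tendsto (fun k => x k - y k) atTop (𝓝 0)) :
    IsBounded (range y) := by
  obtain ⟨R, hR⟩ := hx.exists_norm_le
  obtain ⟨R', hR'⟩ := (Metric.isBounded_range_of_tendsto _ hxy).exists_norm_le
  refine isBounded_iff_forall_norm_le.2 ⟨R + R', ?_⟩
  rintro _ ⟨k, rfl⟩
  calc ‖y k‖ = ‖x k - (x k - y k)‖ := by rw [sub_sub_cancel]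
    _ ≤ ‖x k‖ + ‖x k - y k‖ := norm_sub_le _ _
    _ ≤ R + R' := add_le_add (hR _ ⟨k, rfl⟩) (hR' _ ⟨k, rfl⟩)

theorem tendsto_sub_of_fejer {E : Type*} [SeminormedAddCommGroup E] {x y : ℕ → E} {z : E}
    {κ : ℝ} (hκ : 0 < κ) (h : ∀ k, ‖x (k + 1) - z‖ ^ 2 + κ * ‖x k - y k‖ ^ 2 ≤ ‖x k - z‖ ^ 2) :
    Tendsto (fun k => x k - y k) atTop (𝓝 0) := by
  have hsq := tendsto_zero_of_add_le_succ (fun k => sq_nonneg ‖x k - z‖)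
    (fun k => by positivity) h
  have := (hsq.div_const κ).sqrt
  simp only [mul_div_cancel_left₀ _ hκ.ne', Real.sqrt_sq (norm_nonneg _), zero_div,
    Real.sqrt_zero] at this
  exact tendsto_zero_iff_norm_tendsto_zero.2 this

section InnerProductSpace

variable {H : Type*} [NormedAddCommGroup H] [InnerProductSpace ℝ H]

theorem inclusionInDoubleDual_surjective [CompleteSpace H] :
    Function.Surjective (NormedSpace.inclusionInDoubleDual ℝ H) := by
  intro Φ
  let riesz := InnerProductSpace.toDual ℝ H
  refine ⟨riesz.symm (Φ.comp riesz.toContinuousLinearEquiv.toContinuousLinearMap), ?_⟩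
  ext f
  obtain ⟨w, rfl⟩ := riesz.surjective f
  rw [NormedSpace.dual_def, InnerProductSpace.toDual_apply_apply, real_inner_comm,
    InnerProductSpace.toDual_symm_apply]
  rfl

theorem isCompact_closure_image_toWeakSpace [CompleteSpace H] {s : Set H}
    (hs : Bornology.IsBounded s) : IsCompact (closure (toWeakSpace ℝ H '' s)) := by
  refine NormedSpace.isCompact_closure_of_isBounded ℝ H _
    (by rwa [(toWeakSpace ℝ H).injective.preimage_image]) fun Φ _ => ?_
  obtain ⟨v, hv⟩ := inclusionInDoubleDual_surjective (H := H) (StrongDual.toWeakDual.symm Φ)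
  refine ⟨toWeakSpace ℝ H v, DFunLike.ext _ _ fun f => ?_⟩
  exact DFunLike.congr_fun hv f

theorem continuous_inner_toWeakSpace_symm (u : H) :
    Continuous fun v : WeakSpace ℝ H => ⟪(toWeakSpace ℝ H).symm v, u⟫ := by
  refine (WeakBilin.eval_continuous (topDualPairing ℝ H).flip (innerSL ℝ u)).congr fun v => ?_
  exact real_inner_comm _ _

theorem IsClosed.image_toWeakSpace {C : Set H} (hC : IsClosed C) (hconv : Convex ℝ C) :
    IsClosed (toWeakSpace ℝ H '' C) := by
  rw [← closure_eq_iff_isClosed, ← Convex.toWeakSpace_closure ℝ hconv, hC.closure_eq]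

theorem MapClusterPt.inner_toWeakSpace {α : Type*} {l : Filter α} {x : α → H} {q : H}
    (hq : MapClusterPt (toWeakSpace ℝ H q) l fun k => toWeakSpace ℝ H (x k)) (u : H) :
    MapClusterPt ⟪q, u⟫ l fun k => ⟪x k, u⟫ :=
  hq.continuousAt_comp (continuous_inner_toWeakSpace_symm u).continuousAt

theorem MapClusterPt.toWeakSpace_of_tendsto_sub {α : Type*} {l : Filter α} {x y : α → H} {q : H}
    (hq : MapClusterPt (toWeakSpace ℝ H q) l fun k => toWeakSpace ℝ H (x k))
    (hxy : Tendsto (fun k => x k - y k) l (𝓝 0)) :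
    MapClusterPt (toWeakSpace ℝ H q) l fun k => toWeakSpace ℝ H (y k) := by
  have h0 : Tendsto (fun k => toWeakSpace ℝ H (y k - x k)) l (𝓝 0) := by
    have := ((toWeakSpaceCLM ℝ H).continuous.tendsto 0).comp (by simpa using hxy.neg)
    rwa [map_zero] at this
  simpa using hq.add_tendsto_zero h0

theorem eq_of_mapClusterPt_toWeakSpace {x : ℕ → H} {p q : H} {a b : ℝ}
    (ha : Tendsto (fun k => ‖x k - p‖) atTop (𝓝 a)) (hb : Tendsto (fun k => ‖x k - q‖) atTop (𝓝 b))
    (hp : MapClusterPt (toWeakSpace ℝ H p) atTop fun k => toWeakSpace ℝ H (x k))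
    (hq : MapClusterPt (toWeakSpace ℝ H q) atTop fun k => toWeakSpace ℝ H (x k)) : p = q := by
  have hpolar (k : ℕ) :
      ⟪x k, p - q⟫ = (‖x k - q‖ ^ 2 - ‖x k - p‖ ^ 2 + ‖p‖ ^ 2 - ‖q‖ ^ 2) / 2 := by
    rw [norm_sub_sq_real, norm_sub_sq_real, inner_sub_right]
    ring
  have hlim :
      Tendsto (fun k => ⟪x k, p - q⟫) atTop (𝓝 ((b ^ 2 - a ^ 2 + ‖p‖ ^ 2 - ‖q‖ ^ 2) / 2)) := by
    simp_rw [hpolar]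
    exact ((((hb.pow 2).sub (ha.pow 2)).add_const _).sub_const _).div_const 2
  have hpp := (hp.inner_toWeakSpace (p - q)).eq_of_tendsto hlim
  have hqq := (hq.inner_toWeakSpace (p - q)).eq_of_tendsto hlim
  have : ‖p - q‖ ^ 2 = 0 := by
    rw [← real_inner_self_eq_norm_sq, inner_sub_left, hpp, hqq, sub_self]
  simpa [sub_eq_zero] using this

theorem exists_tendsto_toWeakSpace_of_fejer [CompleteSpace H] {x : ℕ → H} {S : Set H}
    (hS : S.Nonempty) (hfejer : ∀ z ∈ S, ∀ k, ‖x (k + 1) - z‖ ≤ ‖x k - z‖)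
    (hcluster : ∀ q, MapClusterPt (toWeakSpace ℝ H q) atTop (fun k => toWeakSpace ℝ H (x k)) →
      q ∈ S) :
    ∃ p ∈ S, Tendsto (fun k => toWeakSpace ℝ H (x k)) atTop (𝓝 (toWeakSpace ℝ H p)) := by
  have hdist (z : H) (hz : z ∈ S) : Tendsto (fun k => ‖x k - z‖) atTop (𝓝 (⨅ k, ‖x k - z‖)) :=
    tendsto_atTop_ciInf (antitone_nat_of_succ_le (hfejer z hz)) ⟨0, by
      rintro _ ⟨k, rfl⟩
      exact norm_nonneg _⟩
  obtain ⟨z, hz⟩ := hS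
  set K := closure (toWeakSpace ℝ H '' range x)
  have hK : IsCompact K :=
    isCompact_closure_image_toWeakSpace (isBounded_range_of_fejer (hfejer z hz))
  have hxK : ∀ k, toWeakSpace ℝ H (x k) ∈ K := fun k => subset_closure ⟨x k, ⟨k, rfl⟩, rfl⟩
  obtain ⟨p', -, hp'⟩ := hK.exists_mapClusterPt (f := atTop)
    (u := fun k => toWeakSpace ℝ H (x k)) (le_principal_iff.2 (mem_map.2 (univ_mem' hxK)))
  obtain ⟨p, rfl⟩ := (toWeakSpace ℝ H).surjective p'
  have hpS := hcluster p hp'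
  refine ⟨p, hpS, hK.tendsto_nhds_of_unique_mapClusterPt (.of_forall hxK) fun q' _ hq' => ?_⟩
  obtain ⟨q, rfl⟩ := (toWeakSpace ℝ H).surjective q'
  rw [eq_of_mapClusterPt_toWeakSpace (hdist q (hcluster q hq')) (hdist p hpS) hq' hp']

theorem inner_sub_le_zero_of_forall_norm_sub_le {K : Set H} (hK : Convex ℝ K) {u v : H}
    (hv : v ∈ K) (hmin : ∀ w ∈ K, ‖u - v‖ ≤ ‖u - w‖) : ∀ w ∈ K, ⟪u - v, w - v⟫ ≤ 0 := by
  refine (norm_eq_iInf_iff_real_inner_le_zero hK hv).1 (le_antisymm ?_ ?_)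
  · have : Nonempty K := ⟨⟨v, hv⟩⟩
    exact le_ciInf fun w => hmin w w.2
  · exact ciInf_le ⟨0, by rintro _ ⟨w, rfl⟩; exact norm_nonneg _⟩ (⟨v, hv⟩ : K)

theorem norm_sub_sq_add_norm_sub_sq_le {u v w : H} (h : ⟪u - v, w - v⟫ ≤ 0) :
    ‖v - w‖ ^ 2 + ‖u - v‖ ^ 2 ≤ ‖u - w‖ ^ 2 := by
  have hsplit : u - w = (u - v) - (w - v) := by abel
  rw [hsplit, norm_sub_sq_real (u - v) (w - v), norm_sub_rev v w]
  linarith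

theorem convex_setOf_inner_sub_nonpos (a b : H) : Convex ℝ {w : H | ⟪a, w - b⟫ ≤ 0} := by
  have hset : {w : H | ⟪a, w - b⟫ ≤ 0} = {w | ⟪a, w⟫ ≤ ⟪a, b⟫} := by
    ext w
    simp [inner_sub_right]
  rw [hset]
  exact convex_halfSpace_le (innerₛₗ ℝ a).isLinear _

theorem div_sq_mul_norm_sq_le {a d : H} {c₁ c₂ : ℝ} (hc₁ : 0 ≤ c₁)
    (h₁ : c₁ * ‖a‖ ^ 2 ≤ ⟪a, d⟫) (h₂ : ‖d‖ ≤ c₂ * ‖a‖) :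
    (c₁ / c₂) ^ 2 * ‖a‖ ^ 2 ≤ (⟪a, d⟫ / ‖d‖ ^ 2) ^ 2 * ‖d‖ ^ 2 := by
  rcases eq_or_ne d 0 with rfl | hd
  · rw [inner_zero_right] at h₁
    rcases mul_eq_zero.1 (le_antisymm h₁ (by positivity)) with h | h <;> simp [h]
  have hd' : 0 < ‖d‖ := norm_pos_iff.2 hd
  have hc₂ : 0 < c₂ := pos_of_mul_pos_left (hd'.trans_le h₂) (norm_nonneg a)
  have hsq : (⟪a, d⟫ / ‖d‖ ^ 2) ^ 2 * ‖d‖ ^ 2 = ⟪a, d⟫ ^ 2 / ‖d‖ ^ 2 := by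
    field_simp
  rw [hsq, le_div_iff₀ (by positivity)]
  calc (c₁ / c₂) ^ 2 * ‖a‖ ^ 2 * ‖d‖ ^ 2 ≤ (c₁ / c₂) ^ 2 * ‖a‖ ^ 2 * (c₂ * ‖a‖) ^ 2 := by gcongr
    _ = (c₁ * ‖a‖ ^ 2) ^ 2 := by field_simp
    _ ≤ ⟪a, d⟫ ^ 2 := pow_le_pow_left₀ (by positivity) h₁ 2

def viSolutions (C : Set H) (F : H → H) : Set H :=
  {z | z ∈ C ∧ ∀ w ∈ C, 0 ≤ ⟪F z, w - z⟫}

theorem mem_viSolutions_of_minty {C : Set H} (hconv : Convex ℝ C) {F : H → H} (hF : Continuous F)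
    {q : H} (hq : q ∈ C) (hminty : ∀ w ∈ C, 0 ≤ ⟪F w, w - q⟫) : q ∈ viSolutions C F := by
  refine ⟨hq, fun w hw => ?_⟩
  have hseg : ∀ t ∈ Ioc (0 : ℝ) 1, 0 ≤ ⟪F (q + t • (w - q)), w - q⟫ := by
    rintro t ⟨ht0, ht1⟩
    have h := hminty _ (hconv.add_smul_sub_mem hq hw ⟨ht0.le, ht1⟩)
    rw [add_sub_cancel_left, real_inner_smul_right] at h
    exact (mul_nonneg_iff_of_pos_left ht0).1 h
  have hlim : Tendsto (fun t : ℝ => ⟪F (q + t • (w - q)), w - q⟫) (𝓝[>] 0) (𝓝 ⟪F q, w - q⟫) := by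
    have hcont : Continuous fun t : ℝ => ⟪F (q + t • (w - q)), w - q⟫ := by fun_prop
    simpa using (hcont.tendsto 0).mono_left nhdsWithin_le_nhds
  exact ge_of_tendsto hlim (mem_of_superset (Ioc_mem_nhdsGT one_pos) hseg)

theorem mem_viSolutions_of_mapClusterPt {C : Set H} (hC : IsClosed C) (hconv : Convex ℝ C)
    {F : H → H} (hmono : ∀ u v, 0 ≤ ⟪F u - F v, u - v⟫) (hF : Continuous F)
    {x y : ℕ → H} {c : ℝ} (hbdd : IsBounded (range x)) (hyC : ∀ k, y k ∈ C)
    (hxy : Tendsto (fun k => x k - y k) atTop (𝓝 0))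
    (hgap : ∀ w ∈ C, ∀ k, ⟪F (y k), y k - w⟫ ≤ c * ‖x k - y k‖ * ‖w - y k‖) {q : H}
    (hq : MapClusterPt (toWeakSpace ℝ H q) atTop fun k => toWeakSpace ℝ H (x k)) :
    q ∈ viSolutions C F := by
  have hyq := hq.toWeakSpace_of_tendsto_sub hxy
  have hqC : q ∈ C := by
    simpa using (hC.image_toWeakSpace hconv).mem_of_mapClusterPt hyq
      (Eventually.of_forall fun k => mem_image_of_mem _ (hyC k))
  obtain ⟨R, hR⟩ := (isBounded_range_of_tendsto_sub hbdd hxy).exists_norm_le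
  refine mem_viSolutions_of_minty hconv hF hqC fun w hw => ?_
  have hwy : IsBoundedUnder (· ≤ ·) atTop fun k => ‖‖w - y k‖‖ := by
    refine isBoundedUnder_of ⟨‖w‖ + R, fun k => ?_⟩
    rw [norm_norm]
    exact (norm_sub_le _ _).trans (add_le_add_right (hR _ ⟨k, rfl⟩) _)
  have hε : Tendsto (fun k => c * ‖x k - y k‖ * ‖w - y k‖) atTop (𝓝 0) := by
    have h0 : Tendsto (fun k => c * ‖x k - y k‖) atTop (𝓝 0) := by
      simpa using hxy.norm.const_mul c
    exact h0.zero_mul_isBoundedUnder_le hwy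
  have hle (k : ℕ) : ⟪y k, F w⟫ ≤ ⟪w, F w⟫ + c * ‖x k - y k‖ * ‖w - y k‖ := by
    have hmon := hmono (y k) w
    rw [inner_sub_left, sub_nonneg, inner_sub_right, real_inner_comm (y k) (F w),
      real_inner_comm w (F w)] at hmon
    linarith [hgap w hw k]
  have := (hyq.inner_toWeakSpace (F w)).le_of_forall_le_add hε hle
  rw [inner_sub_right, real_inner_comm]
  linarith [real_inner_comm q (F w)]

namespace MSEM

variable {F : H → H} {x y : H} {α μ : ℝ}

theorem inner_direction_ge (hα : 0 ≤ α) (hstep : α * ‖F x - F y‖ ≤ μ * ‖x - y‖) :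
    (1 - μ) * ‖x - y‖ ^ 2 ≤ ⟪x - y, (x - y) - α • (F x - F y)⟫ := by
  have h : ⟪x - y, α • (F x - F y)⟫ ≤ μ * ‖x - y‖ ^ 2 := calc
    _ ≤ ‖x - y‖ * ‖α • (F x - F y)‖ := real_inner_le_norm _ _
    _ = ‖x - y‖ * (α * ‖F x - F y‖) := by rw [norm_smul, Real.norm_of_nonneg hα]
    _ ≤ ‖x - y‖ * (μ * ‖x - y‖) := by gcongr
    _ = μ * ‖x - y‖ ^ 2 := by ring
  rw [inner_sub_right, real_inner_self_eq_norm_sq]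
  linarith

theorem norm_direction_le (hα : 0 ≤ α) (hstep : α * ‖F x - F y‖ ≤ μ * ‖x - y‖) :
    ‖(x - y) - α • (F x - F y)‖ ≤ (1 + μ) * ‖x - y‖ := calc
  _ ≤ ‖x - y‖ + ‖α • (F x - F y)‖ := norm_sub_le _ _
  _ = ‖x - y‖ + α * ‖F x - F y‖ := by rw [norm_smul, Real.norm_of_nonneg hα]
  _ ≤ (1 + μ) * ‖x - y‖ := by linarith

theorem inner_sub_apply_le (hα : 0 < α) {L : ℝ} (hLip : ‖F x - F y‖ ≤ L * ‖x - y‖) {w : H}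
    (hproj : ⟪(x - α • F x) - y, w - y⟫ ≤ 0) :
    ⟪F y, y - w⟫ ≤ (α⁻¹ + L) * ‖x - y‖ * ‖w - y‖ := by
  have hFx : α * ⟪F x, y - w⟫ ≤ ‖x - y‖ * ‖w - y‖ := by
    have := neg_le_of_abs_le (abs_real_inner_le_norm (x - y) (w - y))
    rw [sub_right_comm, inner_sub_left, real_inner_smul_left] at hproj
    rw [← neg_sub w y, inner_neg_right]
    linarith
  have hFxy : ⟪F y - F x, y - w⟫ ≤ L * ‖x - y‖ * ‖w - y‖ := calc
    _ ≤ ‖F y - F x‖ * ‖y - w‖ := real_inner_le_norm _ _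
    _ ≤ L * ‖x - y‖ * ‖w - y‖ := by
      rw [norm_sub_rev (F y), norm_sub_rev y]
      gcongr
  have hsplit : ⟪F y, y - w⟫ = α⁻¹ * (α * ⟪F x, y - w⟫) + ⟪F y - F x, y - w⟫ := by
    rw [inv_mul_cancel_left₀ hα.ne', inner_sub_left]
    ring
  rw [hsplit, add_mul, add_mul, mul_assoc α⁻¹]
  gcongr

theorem norm_sub_sq_add_le_of_inner_le {x' z d : H} {γ ρ : ℝ} (hα : 0 ≤ α) (hγ : 0 ≤ γ)
    (hρ0 : 0 ≤ ρ) (hd : d = (x - y) - α • (F x - F y)) (hρ : ρ * ‖d‖ ^ 2 = ⟪x - y, d⟫)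
    (hx'T : ⟪(x - α • F x) - y, x' - y⟫ ≤ 0)
    (hproj : ⟪(x - (γ * ρ * α) • F y) - x', z - x'⟫ ≤ 0) (hz : 0 ≤ ⟪F y, y - z⟫) :
    ‖x' - z‖ ^ 2 + γ * (2 - γ) * (ρ ^ 2 * ‖d‖ ^ 2) ≤ ‖x - z‖ ^ 2 := by
  have hpyth := norm_sub_sq_add_norm_sub_sq_le hproj
  have hexpand : ‖(x - (γ * ρ * α) • F y) - z‖ ^ 2 - ‖(x - (γ * ρ * α) • F y) - x'‖ ^ 2
      = ‖x - z‖ ^ 2 - ‖x - x'‖ ^ 2 - 2 * (γ * ρ * α) * ⟪F y, x' - z⟫ := by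
    rw [sub_right_comm x _ z, sub_right_comm x _ x', norm_sub_sq_real (x - z),
      norm_sub_sq_real (x - x'), real_inner_smul_right, real_inner_smul_right,
      real_inner_comm (x' - z) (F y),
      show x' - z = (x - z) - (x - x') by abel, inner_sub_left (x - z) (x - x')]
    ring
  have hhalf : ⟪d, x' - y⟫ ≤ α * ⟪F y, x' - y⟫ := by
    have hd' : d = ((x - α • F x) - y) + α • F y := by rw [hd, smul_sub]; abel
    rw [hd', inner_add_left, real_inner_smul_left]
    linarith
  have hsplit : γ * ρ * ⟪d, x' - y⟫ = γ * ρ * ⟪d, x' - x⟫ + γ * ρ ^ 2 * ‖d‖ ^ 2 := by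
    rw [← sub_add_sub_cancel x' x y, inner_add_right, real_inner_comm (x - y) d, ← hρ]
    ring
  -- completing the square in `x' - x` absorbs `‖x - x'‖ ^ 2` and the cross term `⟪d, x' - x⟫`
  have hsq : 0 ≤ ‖x' - x‖ ^ 2 + 2 * (γ * ρ) * ⟪d, x' - x⟫ + (γ * ρ) ^ 2 * ‖d‖ ^ 2 := by
    have := norm_add_sq_real (x' - x) ((γ * ρ) • d)
    rw [real_inner_smul_right, norm_smul, mul_pow, Real.norm_eq_abs, sq_abs,
      real_inner_comm] at this
    linarith [sq_nonneg ‖x' - x + (γ * ρ) • d‖]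
  have hFz : ⟪F y, x' - y⟫ ≤ ⟪F y, x' - z⟫ := by
    rw [← sub_add_sub_cancel x' y z, inner_add_right]
    linarith
  have hγρ : 0 ≤ γ * ρ := mul_nonneg hγ hρ0
  have hFz' := mul_le_mul_of_nonneg_left hFz (mul_nonneg hγρ hα)
  have hhalf' := mul_le_mul_of_nonneg_left hhalf hγρ
  rw [norm_sub_rev x x'] at hexpand
  linarith

theorem norm_sub_sq_add_le {C : Set H} (hconv : Convex ℝ C)
    (hmono : ∀ u v, 0 ≤ ⟪F u - F v, u - v⟫) {x' z d : H} {γ ρ : ℝ} {T : Set H}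
    (hα : 0 ≤ α) (hγ0 : 0 ≤ γ) (hγ2 : γ ≤ 2) (hμ1 : μ ≤ 1) (hz : z ∈ viSolutions C F)
    (hyC : y ∈ C) (hyproj : ∀ w ∈ C, ‖(x - α • F x) - y‖ ≤ ‖(x - α • F x) - w‖)
    (hstep : α * ‖F x - F y‖ ≤ μ * ‖x - y‖)
    (hT : T = {w | ⟪(x - α • F x) - y, w - y⟫ ≤ 0})
    (hd : d = (x - y) - α • (F x - F y)) (hρ : ρ = ⟪x - y, d⟫ / ‖d‖ ^ 2)
    (hx'T : x' ∈ T)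
    (hx'proj : ∀ w ∈ T, ‖(x - (γ * ρ * α) • F y) - x'‖ ≤ ‖(x - (γ * ρ * α) • F y) - w‖) :
    ‖x' - z‖ ^ 2 + γ * (2 - γ) * ((1 - μ) / (1 + μ)) ^ 2 * ‖x - y‖ ^ 2 ≤ ‖x - z‖ ^ 2 := by
  subst hT
  have hzT : z ∈ {w | ⟪(x - α • F x) - y, w - y⟫ ≤ 0} :=
    inner_sub_le_zero_of_forall_norm_sub_le hconv hyC hyproj z hz.1
  have hproj := inner_sub_le_zero_of_forall_norm_sub_le (convex_setOf_inner_sub_nonpos _ _) hx'T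
    hx'proj z hzT
  have hFz : 0 ≤ ⟪F y, y - z⟫ := by
    have := hmono y z
    rw [inner_sub_left] at this
    linarith [hz.2 y hyC]
  have hdir : (1 - μ) * ‖x - y‖ ^ 2 ≤ ⟪x - y, d⟫ := hd ▸ inner_direction_ge hα hstep
  have hρ0 : 0 ≤ ρ := hρ ▸ div_nonneg ((mul_nonneg (sub_nonneg.2 hμ1) (sq_nonneg _)).trans hdir)
    (sq_nonneg _)
  have hρd : ρ * ‖d‖ ^ 2 = ⟪x - y, d⟫ := hρ ▸ div_mul_cancel_of_imp fun h => by
    rw [norm_eq_zero.1 (pow_eq_zero_iff two_ne_zero |>.1 h), inner_zero_right]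
  have hrate := div_sq_mul_norm_sq_le (sub_nonneg.2 hμ1) hdir (hd ▸ norm_direction_le hα hstep)
  rw [← hρ] at hrate
  have hdecrease := norm_sub_sq_add_le_of_inner_le hα hγ0 hρ0 hd hρd hx'T hproj hFz
  linarith [mul_le_mul_of_nonneg_left hrate (mul_nonneg hγ0 (sub_nonneg.2 hγ2))]

end MSEM

end InnerProductSpace

theorem MSEM_weak_convergence_general
    {H : Type*} [NormedAddCommGroup H] [InnerProductSpace ℝ H] [CompleteSpace H]
    (C : Set H) (hclosed : IsClosed C) (hconv : Convex ℝ C)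
    (F : H → H) (hmono : ∀ x y : H, ⟪F x - F y, x - y⟫ ≥ 0)
    (L : ℝ) (hLip : ∀ x y : H, ‖F x - F y‖ ≤ L * ‖x - y‖)
    (hsol : ∃ z ∈ C, ∀ x ∈ C, ⟪F z, x - z⟫ ≥ 0)
    (γ μ σ αlow : ℝ) (hγ0 : 0 < γ) (hγ2 : γ < 2) (hμ0 : 0 < μ) (hμ1 : μ < 1)
    (hαlow : 0 < αlow)
    (x y : ℕ → H) (α : ℕ → ℝ)
    (hαbd : ∀ k, αlow ≤ α k ∧ α k ≤ σ)
    (hyC : ∀ k, y k ∈ C)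
    (hyproj : ∀ k, ∀ z ∈ C,
      ‖(x k - α k • F (x k)) - y k‖ ≤ ‖(x k - α k • F (x k)) - z‖)
    (hstep : ∀ k, α k * ‖F (x k) - F (y k)‖ ≤ μ * ‖x k - y k‖)
    (T : ℕ → Set H)
    (hT : ∀ k, T k = {w : H | ⟪(x k - α k • F (x k)) - y k, w - y k⟫ ≤ 0})
    (d : ℕ → H) (hd : ∀ k, d k = (x k - y k) - α k • (F (x k) - F (y k)))
    (ρ : ℕ → ℝ) (hρ : ∀ k, ρ k = ⟪x k - y k, d k⟫ / ‖d k‖ ^ 2)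
    (hx1T : ∀ k, x (k + 1) ∈ T k)
    (hx1proj : ∀ k, ∀ z ∈ T k,
      ‖(x k - (γ * ρ k * α k) • F (y k)) - x (k + 1)‖ ≤
        ‖(x k - (γ * ρ k * α k) • F (y k)) - z‖) :
    ∃ p : H, p ∈ C ∧ (∀ w ∈ C, ⟪F p, w - p⟫ ≥ 0) ∧
      ∀ u : H, Filter.Tendsto (fun k => ⟪x k, u⟫) Filter.atTop (𝓝 ⟪p, u⟫) := by
  obtain ⟨z₀, hz₀⟩ := hsol
  have hα (k : ℕ) : 0 < α k := hαlow.trans_le (hαbd k).1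
  set κ := γ * (2 - γ) * ((1 - μ) / (1 + μ)) ^ 2
  have hκ : 0 < κ := by
    have : 0 < 2 - γ := sub_pos.2 hγ2
    have : 0 < 1 - μ := sub_pos.2 hμ1
    positivity
  have hfejer (z : H) (hz : z ∈ viSolutions C F) (k : ℕ) :
      ‖x (k + 1) - z‖ ^ 2 + κ * ‖x k - y k‖ ^ 2 ≤ ‖x k - z‖ ^ 2 :=
    MSEM.norm_sub_sq_add_le hconv hmono (hα k).le hγ0.le hγ2.le hμ1.le hz (hyC k) (hyproj k)
      (hstep k) (hT k) (hd k) (hρ k) (hx1T k) (hx1proj k)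
  have hfejer' (z : H) (hz : z ∈ viSolutions C F) (k : ℕ) : ‖x (k + 1) - z‖ ≤ ‖x k - z‖ :=
    pow_le_pow_iff_left₀ (norm_nonneg _) (norm_nonneg _) two_ne_zero |>.1 <| by
      linarith [hfejer z hz k, mul_nonneg hκ.le (sq_nonneg ‖x k - y k‖)]
  have hgap (w : H) (hw : w ∈ C) (k : ℕ) :
      ⟪F (y k), y k - w⟫ ≤ (αlow⁻¹ + L) * ‖x k - y k‖ * ‖w - y k‖ := by
    refine (MSEM.inner_sub_apply_le (hα k) (hLip _ _)
      (inner_sub_le_zero_of_forall_norm_sub_le hconv (hyC k) (hyproj k) w hw)).trans ?_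
    gcongr
    exact (hαbd k).1
  have hF : Continuous F :=
    (LipschitzWith.of_dist_le' fun a b => by simpa [dist_eq_norm] using hLip a b).continuous
  obtain ⟨p, hp, hlim⟩ := exists_tendsto_toWeakSpace_of_fejer ⟨z₀, hz₀⟩ hfejer' fun q hq =>
    mem_viSolutions_of_mapClusterPt hclosed hconv hmono hF
      (isBounded_range_of_fejer (hfejer' z₀ hz₀)) hyC (tendsto_sub_of_fejer hκ (hfejer z₀ hz₀))
      hgap hq
  exact ⟨p, hp.1, hp.2, fun u => ((continuous_inner_toWeakSpace_symm u).tendsto _).comp hlim⟩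

theorem MSEM_weak_convergence
    {H : Type*} [NormedAddCommGroup H] [InnerProductSpace ℝ H] [CompleteSpace H]
    (C : Set H) (hne : C.Nonempty) (hclosed : IsClosed C) (hconv : Convex ℝ C)
    (F : H → H) (hmono : ∀ x y : H, ⟪F x - F y, x - y⟫ ≥ 0)
    (L : ℝ) (hL : 0 < L) (hLip : ∀ x y : H, ‖F x - F y‖ ≤ L * ‖x - y‖)
    (hsol : ∃ z ∈ C, ∀ x ∈ C, ⟪F z, x - z⟫ ≥ 0)
    (γ μ σ αlow : ℝ) (hγ0 : 0 < γ) (hγ2 : γ < 2) (hμ0 : 0 < μ) (hμ1 : μ < 1)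
    (hαlow : 0 < αlow)
    (x y : ℕ → H) (α : ℕ → ℝ)
    (hαbd : ∀ k, αlow ≤ α k ∧ α k ≤ σ)
    (hyC : ∀ k, y k ∈ C)
    (hyproj : ∀ k, ∀ z ∈ C,
      ‖(x k - α k • F (x k)) - y k‖ ≤ ‖(x k - α k • F (x k)) - z‖)
    (hstep : ∀ k, α k * ‖F (x k) - F (y k)‖ ≤ μ * ‖x k - y k‖)
    (hxy : ∀ k, x k ≠ y k)
    (T : ℕ → Set H)
    (hT : ∀ k, T k = {w : H | ⟪(x k - α k • F (x k)) - y k, w - y k⟫ ≤ 0})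
    (d : ℕ → H) (hd : ∀ k, d k = (x k - y k) - α k • (F (x k) - F (y k)))
    (ρ : ℕ → ℝ) (hρ : ∀ k, ρ k = ⟪x k - y k, d k⟫ / ‖d k‖ ^ 2)
    (hx1T : ∀ k, x (k + 1) ∈ T k)
    (hx1proj : ∀ k, ∀ z ∈ T k,
      ‖(x k - (γ * ρ k * α k) • F (y k)) - x (k + 1)‖ ≤
        ‖(x k - (γ * ρ k * α k) • F (y k)) - z‖) :
    ∃ p : H, p ∈ C ∧ (∀ w ∈ C, ⟪F p, w - p⟫ ≥ 0) ∧
      ∀ u : H, Filter.Tendsto (fun k => ⟪x k, u⟫) Filter.atTop (𝓝 ⟪p, u⟫) :=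
  MSEM_weak_convergence_general C hclosed hconv F hmono L hLip hsol γ μ σ αlow hγ0 hγ2 hμ0 hμ1 hαlow
    x y α hαbd hyC hyproj hstep T hT d hd ρ hρ hx1T hx1proj
end

section
/- (Demiclosedness argument.) Let $C \subseteq \mathcal{H}$ be nonempty closed convex, $F$ monotone and $L$-Lipschitz. Suppose sequences $\{x^k\}, \{y^k\}$ satisfy $y^k = P_C(x^k - \alpha_k F(x^k))$ with $\alpha_k \geq \underline{\alpha} > 0$ bounded above, $\|x^k - y^k\| \to 0$, and $x^{k_i} \rightharpoonup \hat{x}$ along a subsequence. Then $\hat{x} \in C$ and $\hat{x}$ solves the variational inequality: $\langle F(\hat{x}), x - \hat{x}\rangle \geq 0$ for all $x \in C$. -/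
/-! The projection inequality for `y = P_C(x - α F x)`, monotonicity of `F` at `(w, y)` and the
Lipschitz bound give `⟪F w, w - y⟫ ≥ -(α⁻¹ + L) ‖x - y‖ ‖w - y‖` for every `w ∈ C`. Along the
subsequence, `y` converges weakly to `x̂` (it is norm-close to `x`) and stays bounded, so in the
limit `⟪F w, w - x̂⟫ ≥ 0` for all `w ∈ C`; closed convex sets being weakly closed, `x̂ ∈ C`.
Minty's trick, i.e. testing with `w = x̂ + t (w - x̂)` and letting `t → 0⁺`, then turns the
"dual" variational inequality into the primal one. -/

open scoped RealInnerProductSpace Topology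

open Filter

section

variable {H : Type*} [NormedAddCommGroup H] [InnerProductSpace ℝ H]

def WeakTendsto {ι : Type*} (u : ι → H) (l : Filter ι) (x : H) : Prop :=
  ∀ v : H, Tendsto (fun i => ⟪u i, v⟫) l (𝓝 ⟪x, v⟫)

namespace WeakTendsto

variable {ι : Type*} {u v : ι → H} {l : Filter ι} {x : H}

theorem of_tendsto_norm_sub (hu : WeakTendsto u l x)
    (huv : Tendsto (fun i => ‖u i - v i‖) l (𝓝 0)) : WeakTendsto v l x := by
  intro p
  have hsmall : Tendsto (fun i => ⟪u i - v i, p⟫) l (𝓝 0) := by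
    refine squeeze_zero_norm (fun i => ?_) (by simpa using huv.mul_const ‖p‖)
    simpa only [Real.norm_eq_abs] using abs_real_inner_le_norm (u i - v i) p
  simpa only [inner_sub_left, sub_sub_cancel, sub_zero] using (hu p).sub hsmall

theorem tendsto_inner_sub (hu : WeakTendsto u l x) (p w : H) :
    Tendsto (fun i => ⟪p, u i - w⟫) l (𝓝 ⟪p, x - w⟫) := by
  simpa only [inner_sub_right, real_inner_comm p] using (hu p).sub_const ⟪w, p⟫

theorem mem_of_isComplete {C : Set H} (hC : IsComplete C) (hconv : Convex ℝ C) [l.NeBot]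
    (hu : WeakTendsto u l x) (hmem : ∀ᶠ i in l, u i ∈ C) : x ∈ C := by
  obtain ⟨i, hi⟩ := hmem.exists
  obtain ⟨p, hpC, hp⟩ := exists_norm_eq_iInf_of_complete_convex ⟨u i, hi⟩ hC hconv x
  have hobtuse := (norm_eq_iInf_iff_real_inner_le_zero hconv hpC).1 hp
  have hlim : ⟪x - p, x - p⟫ ≤ 0 :=
    le_of_tendsto (hu.tendsto_inner_sub (x - p) p) (hmem.mono fun i hi => hobtuse _ hi)
  rwa [sub_eq_zero.mp (real_inner_self_nonpos.mp hlim)]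

theorem exists_norm_le [CompleteSpace H] {u : ℕ → H} (hu : WeakTendsto u atTop x) :
    ∃ M, ∀ i, ‖u i‖ ≤ M := by
  have hpointwise : ∀ v : H, ∃ M, ∀ i, ‖innerSL ℝ (u i) v‖ ≤ M := fun v =>
    ((hu v).norm.bddAbove_range).imp fun _ hM i => by
      simpa only [innerSL_apply_apply, real_inner_comm] using hM (Set.mem_range_self i)
  obtain ⟨M, hM⟩ := banach_steinhaus hpointwise
  exact ⟨M, fun i => by simpa only [innerSL_apply_norm] using hM i⟩

theorem inner_sub_nonneg [CompleteSpace H] {u : ℕ → H} (hu : WeakTendsto u atTop x) {p w : H}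
    {ε : ℕ → ℝ} (hε : Tendsto ε atTop (𝓝 0)) (hle : ∀ i, -(ε i * ‖w - u i‖) ≤ ⟪p, w - u i⟫) :
    0 ≤ ⟪p, w - x⟫ := by
  obtain ⟨M, hM⟩ := hu.exists_norm_le
  have herr : Tendsto (fun i => -(ε i * ‖w - u i‖)) atTop (𝓝 0) := by
    refine squeeze_zero_norm (fun i => ?_)
      (by simpa only [norm_zero, zero_mul] using hε.norm.mul_const (‖w‖ + M))
    rw [norm_neg, norm_mul, norm_norm]
    gcongr
    exact (norm_sub_le _ _).trans (add_le_add_right (hM i) _)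
  have hlim : Tendsto (fun i => ⟪p, w - u i⟫) atTop (𝓝 ⟪p, w - x⟫) := by
    simpa only [← inner_neg_right, neg_sub] using (hu.tendsto_inner_sub p w).neg
  exact le_of_tendsto_of_tendsto' herr hlim hle

end WeakTendsto

theorem real_inner_sub_le_zero_of_forall_norm_sub_le {K : Set H} (hK : Convex ℝ K) {u v : H}
    (hu : u ∈ K) (hmin : ∀ z ∈ K, ‖v - u‖ ≤ ‖v - z‖) : ∀ z ∈ K, ⟪v - u, z - u⟫ ≤ 0 := by
  have : Nonempty K := ⟨⟨u, hu⟩⟩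
  refine (norm_eq_iInf_iff_real_inner_le_zero hK hu).1
    (le_antisymm (le_ciInf fun z => hmin z z.2) ?_)
  exact ciInf_le ⟨0, Set.forall_mem_range.2 fun _ => norm_nonneg (v - _)⟩ (⟨u, hu⟩ : K)

theorem le_inner_sub_of_projection_step {F : H → H} {x y w : H} {a c L : ℝ} (hc : 0 < c)
    (hca : c ≤ a) (hmono : 0 ≤ ⟪F w - F y, w - y⟫) (hLip : ‖F x - F y‖ ≤ L * ‖x - y‖)
    (hproj : ⟪x - a • F x - y, w - y⟫ ≤ 0) :
    -((c⁻¹ + L) * ‖x - y‖ * ‖w - y‖) ≤ ⟪F w, w - y⟫ := by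
  have ha : 0 < a := hc.trans_le hca
  have hstep : ⟪x - y, w - y⟫ ≤ a * ⟪F x, w - y⟫ := by
    rw [sub_right_comm, inner_sub_left, real_inner_smul_left] at hproj
    linarith
  have hFx : -(c⁻¹ * (‖x - y‖ * ‖w - y‖)) ≤ ⟪F x, w - y⟫ := by
    have hcs : -(‖x - y‖ * ‖w - y‖) ≤ ⟪x - y, w - y⟫ :=
      neg_le_of_abs_le (abs_real_inner_le_norm _ _)
    calc -(c⁻¹ * (‖x - y‖ * ‖w - y‖)) ≤ -(a⁻¹ * (‖x - y‖ * ‖w - y‖)) := by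
          gcongr
      _ ≤ a⁻¹ * ⟪x - y, w - y⟫ := by rw [← mul_neg]; gcongr
      _ ≤ ⟪F x, w - y⟫ := by rw [inv_mul_le_iff₀ ha]; exact hstep
  have hFxy : ⟪F x - F y, w - y⟫ ≤ L * ‖x - y‖ * ‖w - y‖ :=
    (real_inner_le_norm _ _).trans (by gcongr)
  rw [inner_sub_left] at hmono hFxy
  linarith

theorem Convex.inner_sub_nonneg_of_minty {C : Set H} (hconv : Convex ℝ C) {F : H → H}
    (hF : ContinuousOn F C) {z : H} (hz : z ∈ C) (hdual : ∀ w ∈ C, 0 ≤ ⟪F w, w - z⟫) :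
    ∀ w ∈ C, 0 ≤ ⟪F z, w - z⟫ := by
  intro w hw
  have hseg : ∀ t ∈ Set.Icc (0 : ℝ) 1, z + t • (w - z) ∈ C := fun t ht =>
    hconv.add_smul_sub_mem hz hw ht
  have hpath : Tendsto (fun t : ℝ => z + t • (w - z)) (𝓝[>] 0) (𝓝[C] z) := by
    refine tendsto_nhdsWithin_iff.2 ⟨?_, ?_⟩
    · have hcont : Continuous fun t : ℝ => z + t • (w - z) := by fun_prop
      simpa using (hcont.tendsto 0).mono_left nhdsWithin_le_nhds
    · filter_upwards [Ioc_mem_nhdsGT one_pos] with t ht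
      exact hseg t (Set.Ioc_subset_Icc_self ht)
  have hlim : Tendsto (fun t : ℝ => ⟪F (z + t • (w - z)), w - z⟫) (𝓝[>] 0) (𝓝 ⟪F z, w - z⟫) :=
    ((hF z hz).tendsto.comp hpath).inner tendsto_const_nhds
  refine ge_of_tendsto hlim ?_
  filter_upwards [Ioc_mem_nhdsGT one_pos] with t ht
  have := hdual _ (hseg t (Set.Ioc_subset_Icc_self ht))
  rwa [add_sub_cancel_left, real_inner_smul_right, mul_nonneg_iff_of_pos_left ht.1] at this

end

theorem demiclosedness_argument_general
    {H : Type*} [NormedAddCommGroup H] [InnerProductSpace ℝ H] [CompleteSpace H]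
    (C : Set H) (hclosed : IsClosed C) (hconv : Convex ℝ C)
    (F : H → H) (hmono : ∀ x y : H, ⟪F x - F y, x - y⟫ ≥ 0)
    (L : ℝ) (hLip : ∀ x y : H, ‖F x - F y‖ ≤ L * ‖x - y‖)
    (x y : ℕ → H) (α : ℕ → ℝ) (αlow αhigh : ℝ) (hαlow : 0 < αlow)
    (hαbd : ∀ k, αlow ≤ α k ∧ α k ≤ αhigh)
    (hyC : ∀ k, y k ∈ C)
    (hyproj : ∀ k, ∀ z ∈ C,
      ‖(x k - α k • F (x k)) - y k‖ ≤ ‖(x k - α k • F (x k)) - z‖)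
    (hdiff : Filter.Tendsto (fun k => ‖x k - y k‖) Filter.atTop (𝓝 0))
    (xhat : H) (φ : ℕ → ℕ) (hφ : StrictMono φ)
    (hweak : ∀ u : H, Filter.Tendsto (fun i => ⟪x (φ i), u⟫) Filter.atTop (𝓝 ⟪xhat, u⟫)) :
    xhat ∈ C ∧ ∀ w ∈ C, ⟪F xhat, w - xhat⟫ ≥ 0 := by
  have hdiffφ : Tendsto (fun i => ‖x (φ i) - y (φ i)‖) atTop (𝓝 0) :=
    hdiff.comp hφ.tendsto_atTop
  have hyweak : WeakTendsto (fun i => y (φ i)) atTop xhat :=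
    WeakTendsto.of_tendsto_norm_sub hweak hdiffφ
  have hxC : xhat ∈ C :=
    hyweak.mem_of_isComplete hclosed.isComplete hconv (Eventually.of_forall fun i => hyC (φ i))
  have hF : Continuous F :=
    (LipschitzWith.of_dist_le' fun a b => by simpa only [dist_eq_norm] using hLip a b).continuous
  refine ⟨hxC, hconv.inner_sub_nonneg_of_minty hF.continuousOn hxC fun w hw => ?_⟩
  have hε : Tendsto (fun i => (αlow⁻¹ + L) * ‖x (φ i) - y (φ i)‖) atTop (𝓝 0) := by
    simpa only [mul_zero] using hdiffφ.const_mul (αlow⁻¹ + L)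
  refine hyweak.inner_sub_nonneg hε fun i => ?_
  simpa only [mul_assoc] using le_inner_sub_of_projection_step hαlow (hαbd (φ i)).1
    (hmono w (y (φ i))) (hLip _ _)
    (real_inner_sub_le_zero_of_forall_norm_sub_le hconv (hyC _) (hyproj (φ i)) w hw)

theorem demiclosedness_argument
    {H : Type*} [NormedAddCommGroup H] [InnerProductSpace ℝ H] [CompleteSpace H]
    (C : Set H) (hne : C.Nonempty) (hclosed : IsClosed C) (hconv : Convex ℝ C)
    (F : H → H) (hmono : ∀ x y : H, ⟪F x - F y, x - y⟫ ≥ 0)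
    (L : ℝ) (hL : 0 < L) (hLip : ∀ x y : H, ‖F x - F y‖ ≤ L * ‖x - y‖)
    (x y : ℕ → H) (α : ℕ → ℝ) (αlow αhigh : ℝ) (hαlow : 0 < αlow)
    (hαbd : ∀ k, αlow ≤ α k ∧ α k ≤ αhigh)
    (hyC : ∀ k, y k ∈ C)
    (hyproj : ∀ k, ∀ z ∈ C,
      ‖(x k - α k • F (x k)) - y k‖ ≤ ‖(x k - α k • F (x k)) - z‖)
    (hdiff : Filter.Tendsto (fun k => ‖x k - y k‖) Filter.atTop (𝓝 0))
    (xhat : H) (φ : ℕ → ℕ) (hφ : StrictMono φ)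
    (hweak : ∀ u : H, Filter.Tendsto (fun i => ⟪x (φ i), u⟫) Filter.atTop (𝓝 ⟪xhat, u⟫)) :
    xhat ∈ C ∧ ∀ w ∈ C, ⟪F xhat, w - xhat⟫ ≥ 0 :=
  demiclosedness_argument_general C hclosed hconv F hmono L hLip x y α αlow αhigh hαlow hαbd hyC
    hyproj hdiff xhat φ hφ hweak
end
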